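/- Let k be a field and t ∈ k nonzero. A point (x0:x1:x2:x3) of P^3 over the algebraic closure of k is a common zero of the four forms (f_t)_0, (f_t)_1, (f_t)_2, (f_t)_3 if and only if x0 = 0 and D(x0,x1,x2,x3) = 0, i.e., x0 = 0 and x1^2*(4*x3*x1 - 3*x2^2) = 0. -/

import Mathlib

/-- The discriminant of the binary cubic `x0*T0^3 + 3*x1*T0^2*T1 + 3*x2*T0*T1^2 + x3*T1^3`. -/
def Dq {R : Type*} [CommRing R] (x0 x1 x2 x3 : R) : R :=
  x0 ^ 2 * x3 ^ 2 - 3 * x1 ^ 2 * x2 ^ 2 - 6 * x0 * x1 * x2 * x3 + 4 * x0 * x2 ^ 3 +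
    4 * x3 * x1 ^ 3

/-- The four degree-13 forms `(f_t)_0, (f_t)_1, (f_t)_2, (f_t)_3` of the Cremona
transformation `g_t`. -/
def fT {R : Type*} [CommRing R] (t x0 x1 x2 x3 : R) : Fin 4 → R :=
  ![x0 * Dq x0 x1 x2 x3 ^ 3,
    x1 * Dq x0 x1 x2 x3 ^ 3 + t * x0 ^ 5 * Dq x0 x1 x2 x3 ^ 2,
    x2 * Dq x0 x1 x2 x3 ^ 3 + 2 * t * x1 * x0 ^ 4 * Dq x0 x1 x2 x3 ^ 2 +
      t ^ 2 * x0 ^ 9 * Dq x0 x1 x2 x3,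
    x3 * Dq x0 x1 x2 x3 ^ 3 + 3 * t * x2 * x0 ^ 4 * Dq x0 x1 x2 x3 ^ 2 +
      3 * t ^ 2 * x1 * x0 ^ 8 * Dq x0 x1 x2 x3 + t ^ 3 * x0 ^ 13]

/-!
Write `D = Dq x0 x1 x2 x3`. If `D ≠ 0`, the form `(f_t)_0 = x0 * D^3` forces `x0 = 0`, after which
`(f_t)_i = x_i * D^3` for every `i`, so the point would be zero. Hence `D = 0`, and then
`(f_t)_3 = t^3 * x0^13` forces `x0 = 0`. Conversely, at `x0 = 0` every `(f_t)_i` is a multiple of `D`.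
-/

section

variable {R : Type*} [CommRing R]

theorem Dq_zero_left (x1 x2 x3 : R) : Dq 0 x1 x2 x3 = x1 ^ 2 * (4 * x3 * x1 - 3 * x2 ^ 2) := by
  simp only [Dq]; ring

theorem fT_zero_left (t x1 x2 x3 : R) :
    fT t 0 x1 x2 x3 = Dq 0 x1 x2 x3 ^ 3 • ![0, x1, x2, x3] := by
  ext i
  fin_cases i <;> simp [fT, mul_comm]

theorem fT_three_of_Dq_eq_zero {t x0 x1 x2 x3 : R} (hD : Dq x0 x1 x2 x3 = 0) :
    fT t x0 x1 x2 x3 3 = t ^ 3 * x0 ^ 13 := by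
  simp [fT, hD]

variable [NoZeroDivisors R]

theorem Dq_eq_zero_of_fT_eq_zero {t x0 x1 x2 x3 : R}
    (hx : ¬(x0 = 0 ∧ x1 = 0 ∧ x2 = 0 ∧ x3 = 0)) (h : ∀ i, fT t x0 x1 x2 x3 i = 0) :
    Dq x0 x1 x2 x3 = 0 := by
  by_contra hD
  have hD3 : Dq x0 x1 x2 x3 ^ 3 ≠ 0 := pow_ne_zero 3 hD
  have hx0 : x0 = 0 := by
    simpa [fT, hD3] using h 0
  subst hx0
  have hv : ∀ i, ![(0 : R), x1, x2, x3] i = 0 := fun i => by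
    simpa [fT_zero_left, hD3] using h i
  exact hx ⟨rfl, hv 1, hv 2, hv 3⟩

theorem fT_eq_zero_iff {t x0 x1 x2 x3 : R} (ht : t ≠ 0)
    (hx : ¬(x0 = 0 ∧ x1 = 0 ∧ x2 = 0 ∧ x3 = 0)) :
    (∀ i, fT t x0 x1 x2 x3 i = 0) ↔ x0 = 0 ∧ Dq x0 x1 x2 x3 = 0 := by
  constructor
  · intro h
    have hD := Dq_eq_zero_of_fT_eq_zero hx h
    have h3 := h 3
    rw [fT_three_of_Dq_eq_zero hD] at h3
    exact ⟨by simpa [ht] using h3, hD⟩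
  · rintro ⟨rfl, hD⟩ i
    simp [fT_zero_left, hD]

end

theorem fundamental_points {k : Type*} [Field k] (t : k) (ht : t ≠ 0)
    (x0 x1 x2 x3 : AlgebraicClosure k) (hx : ¬(x0 = 0 ∧ x1 = 0 ∧ x2 = 0 ∧ x3 = 0)) :
    (∀ i : Fin 4, fT (algebraMap k (AlgebraicClosure k) t) x0 x1 x2 x3 i = 0) ↔
      x0 = 0 ∧ Dq x0 x1 x2 x3 = 0 ∧ x1 ^ 2 * (4 * x3 * x1 - 3 * x2 ^ 2) = 0 := by
  rw [fT_eq_zero_iff ((map_ne_zero _).mpr ht) hx]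
  constructor
  · rintro ⟨rfl, hD⟩
    exact ⟨rfl, hD, Dq_zero_left x1 x2 x3 ▸ hD⟩
  · exact fun ⟨hx0, hD, _⟩ => ⟨hx0, hD⟩
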